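/- arXiv:2009.06411 — 2 statements merged into one kernel-verified Lean document; each statement's English description precedes it below -/
import Mathlib

section
/- Let g : ℕ* → ℂ be an arithmetic function and define f(n) = Σ_{d | n} g(d). Then for every positive integer n, f(n) = Σ_{k=1}^{n} μ(k / gcd(n,k)) · (φ(k) / φ(k / gcd(n,k))) · Σ_{l=1}^{⌊n/k⌋} g(k·l)/(k·l), where μ is the Möbius function, φ is Euler's totient function, and gcd(n,k) denotes the greatest common divisor of n and k. -/
/-!
The weight `μ(k / (n,k)) φ(k) / φ(k / (n,k))` is von Sterneck's closed form of the Ramanujan sum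
`c_k(n) = ∑_{d ∣ (n,k)} d μ(k/d)`, i.e. of the Dirichlet convolution of `μ` with
`d ↦ d · [d ∣ n]`: both are multiplicative in `k` and agree on prime powers. By Möbius inversion,
`∑_{k ∣ m} c_k(n)` is `m` when `m ∣ n` and `0` otherwise, so after substituting `m = k l` the
right-hand side collapses to `∑_{m ∣ n} m · g(m) / m = f(n)`.
-/

open Finset ArithmeticFunction
open scoped Nat ArithmeticFunction.Moebius ArithmeticFunction.zeta

namespace ArithmeticFunction

variable {R K : Type*}

theorem mul_moebius_apply_prime_pow_succ [CommRing R] (f : ArithmeticFunction R) {p : ℕ}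
    (hp : p.Prime) (i : ℕ) : (f * μ) (p ^ (i + 1)) = f (p ^ (i + 1)) - f (p ^ i) := by
  have hμ : ∀ j, (μ : ArithmeticFunction R) (p ^ (j + 2)) = 0 := fun j => by
    simp [intCoe_apply, moebius_apply_prime_pow hp]
  have hdiv : p ^ (i + 1) / p = p ^ i := by rw [pow_succ, Nat.mul_div_cancel _ hp.pos]
  rw [mul_apply,
    Nat.sum_divisorsAntidiagonal' (f := fun a b => f a * (μ : ArithmeticFunction R) b),
    Nat.sum_divisors_prime_pow hp, sum_range_succ', sum_range_succ',
    sum_eq_zero fun j _ => by rw [hμ, mul_zero]]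
  simp only [zero_add, pow_one, pow_zero, Nat.div_one, hdiv, intCoe_apply,
    moebius_apply_prime hp, moebius_apply_one, Int.cast_neg, Int.cast_one]
  ring

def idOnDivisors [Semiring R] (n : ℕ) : ArithmeticFunction R where
  toFun d := if d ∣ n then d else 0
  map_zero' := by simp

theorem idOnDivisors_apply [Semiring R] (n d : ℕ) :
    idOnDivisors n d = if d ∣ n then (d : R) else 0 := rfl

theorem isMultiplicative_idOnDivisors [Semiring R] (n : ℕ) :
    (idOnDivisors n : ArithmeticFunction R).IsMultiplicative := by
  refine ⟨by simp [idOnDivisors_apply], fun {a b} hab => ?_⟩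
  have hdvd : a * b ∣ n ↔ a ∣ n ∧ b ∣ n :=
    ⟨fun h => ⟨dvd_of_mul_right_dvd h, dvd_of_mul_left_dvd h⟩,
      fun h => hab.mul_dvd_of_dvd_of_dvd h.1 h.2⟩
  simp only [idOnDivisors_apply, hdvd]
  by_cases ha : a ∣ n <;> by_cases hb : b ∣ n <;> simp [ha, hb]

def ramanujanSum [CommRing R] (n : ℕ) : ArithmeticFunction R :=
  idOnDivisors n * (μ : ArithmeticFunction R)

theorem isMultiplicative_ramanujanSum [CommRing R] (n : ℕ) :
    (ramanujanSum n : ArithmeticFunction R).IsMultiplicative :=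
  (isMultiplicative_idOnDivisors n).mul isMultiplicative_moebius.intCast

theorem sum_divisors_ramanujanSum [CommRing R] (n m : ℕ) :
    ∑ k ∈ m.divisors, (ramanujanSum n : ArithmeticFunction R) k = if m ∣ n then (m : R) else 0 := by
  rw [← coe_mul_zeta_apply, ramanujanSum, mul_assoc, coe_moebius_mul_coe_zeta, mul_one,
    idOnDivisors_apply]

theorem ramanujanSum_apply_prime_pow_succ [CommRing R] (n : ℕ) {p : ℕ} (hp : p.Prime) (i : ℕ) :
    (ramanujanSum n : ArithmeticFunction R) (p ^ (i + 1)) =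
      (if p ^ (i + 1) ∣ n then (p : R) ^ (i + 1) else 0) -
        if p ^ i ∣ n then (p : R) ^ i else 0 := by
  rw [ramanujanSum, mul_moebius_apply_prime_pow_succ _ hp, idOnDivisors_apply, idOnDivisors_apply,
    Nat.cast_pow, Nat.cast_pow]

def vonSterneck [Field K] (n : ℕ) : ArithmeticFunction K where
  toFun k := μ (k / n.gcd k) * ((φ k : K) / φ (k / n.gcd k))
  map_zero' := by simp

theorem vonSterneck_apply [Field K] (n k : ℕ) :
    (vonSterneck n : ArithmeticFunction K) k = μ (k / n.gcd k) * ((φ k : K) / φ (k / n.gcd k)) :=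
  rfl

theorem isMultiplicative_vonSterneck [Field K] (n : ℕ) :
    (vonSterneck n : ArithmeticFunction K).IsMultiplicative := by
  refine ⟨by simp [vonSterneck_apply], fun {a b} hab => ?_⟩
  have ha : n.gcd a ∣ a := Nat.gcd_dvd_right n a
  have hb : n.gcd b ∣ b := Nat.gcd_dvd_right n b
  have hquot : a * b / n.gcd (a * b) = a / n.gcd a * (b / n.gcd b) := by
    rw [Nat.Coprime.gcd_mul n hab, Nat.div_mul_div_comm ha hb]
  have hcop : (a / n.gcd a).Coprime (b / n.gcd b) :=
    (hab.coprime_dvd_left (Nat.div_dvd_of_dvd ha)).coprime_dvd_right (Nat.div_dvd_of_dvd hb)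
  rw [vonSterneck_apply, vonSterneck_apply, vonSterneck_apply, hquot,
    isMultiplicative_moebius.map_mul_of_coprime hcop, Nat.totient_mul hab, Nat.totient_mul hcop]
  push_cast
  ring

theorem vonSterneck_apply_prime_pow_succ [Field K] [CharZero K] (n : ℕ) {p : ℕ} (hp : p.Prime)
    (i : ℕ) : (vonSterneck n : ArithmeticFunction K) (p ^ (i + 1)) =
      (if p ^ (i + 1) ∣ n then (p : K) ^ (i + 1) else 0) -
        if p ^ i ∣ n then (p : K) ^ i else 0 := by
  obtain ⟨b, hb, hgcd⟩ := (Nat.dvd_prime_pow hp).1 (Nat.gcd_dvd_right n (p ^ (i + 1)))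
  have hdvd : ∀ j ≤ i + 1, p ^ j ∣ n ↔ j ≤ b := fun j hj => by
    rw [← Nat.pow_dvd_pow_iff_le_right hp.one_lt, ← hgcd, Nat.dvd_gcd_iff,
      and_iff_left (pow_dvd_pow p hj)]
  have hquot : p ^ (i + 1) / n.gcd (p ^ (i + 1)) = p ^ (i + 1 - b) := by
    rw [hgcd, Nat.pow_div hb hp.pos]
  have hφ : (φ (p ^ (i + 1)) : K) = p ^ i * (p - 1) := by
    rw [Nat.totient_prime_pow_succ hp, Nat.cast_mul, Nat.cast_pow, Nat.cast_sub hp.one_le,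
      Nat.cast_one]
  rw [vonSterneck_apply, hquot, hφ]
  obtain rfl | rfl | hlt : i + 1 = b ∨ i = b ∨ b + 2 ≤ i + 1 := by omega
  · rw [Nat.sub_self, pow_zero, moebius_apply_one, Nat.totient_one,
      if_pos ((hdvd _ le_rfl).2 le_rfl), if_pos ((hdvd i (by omega)).2 (by omega))]
    push_cast
    ring
  · have hp1 : (p : K) - 1 ≠ 0 := sub_ne_zero.2 (by exact_mod_cast hp.ne_one)
    rw [Nat.add_sub_cancel_left, pow_one, moebius_apply_prime hp, Nat.totient_prime hp,
      Nat.cast_sub hp.one_le, if_neg (by rw [hdvd _ le_rfl]; omega),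
      if_pos ((hdvd i (by omega)).2 le_rfl)]
    push_cast
    field_simp
    ring
  · rw [moebius_apply_prime_pow hp (by omega), if_neg (by omega),
      if_neg (by rw [hdvd _ le_rfl]; omega), if_neg (by rw [hdvd i (by omega)]; omega)]
    simp

theorem vonSterneck_eq_ramanujanSum [Field K] [CharZero K] (n : ℕ) :
    (vonSterneck n : ArithmeticFunction K) = ramanujanSum n := by
  rw [IsMultiplicative.eq_iff_eq_on_prime_powers _ (isMultiplicative_vonSterneck n) _
    (isMultiplicative_ramanujanSum n)]
  rintro p (_ | i) hp
  · rw [pow_zero, (isMultiplicative_vonSterneck n).map_one,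
      (isMultiplicative_ramanujanSum n).map_one]
  · rw [vonSterneck_apply_prime_pow_succ n hp, ramanujanSum_apply_prime_pow_succ n hp]

end ArithmeticFunction

theorem Nat.sum_Icc_sum_Icc_div_eq_sum_Icc_sum_divisors {M : Type*} [AddCommMonoid M] (n : ℕ)
    (T : ℕ → ℕ → M) :
    ∑ k ∈ Icc 1 n, ∑ l ∈ Icc 1 (n / k), T k (k * l) = ∑ m ∈ Icc 1 n, ∑ k ∈ m.divisors, T k m := by
  rw [sum_sigma', sum_sigma']
  refine sum_nbij' (fun x => ⟨x.1 * x.2, x.1⟩) (fun x => ⟨x.2, x.1 / x.2⟩) ?_ ?_ ?_ ?_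
    fun _ _ => rfl
  · rintro ⟨k, l⟩ h
    obtain ⟨⟨hk, -⟩, hl, hln⟩ := mem_sigma.1 h |>.imp mem_Icc.1 mem_Icc.1
    refine mem_sigma.2 ⟨mem_Icc.2 ⟨Nat.mul_pos hk hl, ?_⟩,
      Nat.mem_divisors.2 ⟨dvd_mul_right k l, (Nat.mul_pos hk hl).ne'⟩⟩
    exact (Nat.mul_le_mul_left k hln).trans (Nat.mul_div_le n k)
  · rintro ⟨m, k⟩ h
    obtain ⟨⟨hm, hmn⟩, hkm, -⟩ := mem_sigma.1 h |>.imp mem_Icc.1 Nat.mem_divisors.1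
    have hk : 0 < k := Nat.pos_of_dvd_of_pos hkm hm
    have hkm' : k ≤ m := Nat.le_of_dvd hm hkm
    exact mem_sigma.2 ⟨mem_Icc.2 ⟨hk, hkm'.trans hmn⟩,
      mem_Icc.2 ⟨Nat.div_pos hkm' hk, Nat.div_le_div_right hmn⟩⟩
  · rintro ⟨k, l⟩ h
    obtain ⟨hk, -⟩ := mem_Icc.1 (mem_sigma.1 h).1
    simp only [Nat.mul_div_cancel_left l hk]
  · rintro ⟨m, k⟩ h
    simp only [Nat.mul_div_cancel' (Nat.dvd_of_mem_divisors (mem_sigma.1 h).2)]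

theorem sum_mul_sum_Icc_div_eq_sum_divisors {K : Type*} [Field K] [CharZero K] {n : ℕ}
    (c g : ℕ → K) (hc : ∀ m, ∑ k ∈ m.divisors, c k = if m ∣ n then (m : K) else 0) :
    ∑ k ∈ Icc 1 n, c k * ∑ l ∈ Icc 1 (n / k), g (k * l) / ((k : K) * l) =
      ∑ d ∈ n.divisors, g d := by
  calc _ = ∑ k ∈ Icc 1 n, ∑ l ∈ Icc 1 (n / k), c k * (g (k * l) / ((k * l : ℕ) : K)) := by
          simp_rw [mul_sum, Nat.cast_mul]
    _ = ∑ m ∈ Icc 1 n, (∑ k ∈ m.divisors, c k) * (g m / m) := by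
          rw [Nat.sum_Icc_sum_Icc_div_eq_sum_Icc_sum_divisors n fun k m => c k * (g m / m)]
          simp_rw [sum_mul]
    _ = ∑ m ∈ Icc 1 n with m ∣ n, g m := by
          rw [sum_filter]
          refine sum_congr rfl fun m hm => ?_
          have hm0 : (m : K) ≠ 0 := Nat.cast_ne_zero.2 (Nat.one_le_iff_ne_zero.1 (mem_Icc.1 hm).1)
          rw [hc]
          split_ifs
          · exact mul_div_cancel₀ _ hm0
          · exact zero_mul _
    _ = ∑ d ∈ n.divisors, g d := by
          rw [Nat.divisors, Ico_add_one_right_eq_Icc]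

theorem divisor_sum_formula (g : ℕ → ℂ) (f : ℕ → ℂ)
    (hf : ∀ n : ℕ, 0 < n → f n = ∑ d ∈ n.divisors, g d)
    (n : ℕ) (hn : 0 < n) :
    f n = ∑ k ∈ Icc 1 n,
      (μ (k / Nat.gcd n k) : ℂ) *
        ((Nat.totient k : ℂ) / (Nat.totient (k / Nat.gcd n k) : ℂ)) *
        ∑ l ∈ Icc 1 (n / k), g (k * l) / ((k : ℂ) * l) := by
  rw [hf n hn]
  refine (sum_mul_sum_Icc_div_eq_sum_divisors (vonSterneck n) g fun m => ?_).symm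
  rw [vonSterneck_eq_ramanujanSum, sum_divisors_ramanujanSum]
end

section
/- Let g : ℕ* → ℂ be an arithmetic function and define f(n) = Σ_{d | n} g(d). Then for every positive integer n, f(n) = Σ_{b=1}^{n} c_b(n) · Σ_{u=1}^{⌊n/b⌋} g(b·u)/(b·u), where c_b(n) is the Ramanujan sum. -/
/-!
Writing each fraction `k / m` with `1 ≤ k ≤ m` in lowest terms `j / b`, where `b ∣ m` and
`gcd j b = 1`, gives `∑_{b ∣ m} c_b(n) = ∑_{k=1}^{m} exp(2πikn/m)`, which is `m` if `m ∣ n` and `0`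
otherwise (orthogonality of `m`-th roots of unity). Grouping the terms of the right-hand side
according to `m = b u` turns it into `∑_{m ≤ n} (g m / m) ∑_{b ∣ m} c_b(n) = ∑_{m ∣ n} g m`.
-/

open Finset Real Complex

/-- The Ramanujan sum `c_m(n) = ∑_{1 ≤ k ≤ m, gcd(k,m)=1} exp(2πikn/m)`. -/
noncomputable def ramanujanSum (m n : ℕ) : ℂ :=
  ∑ k ∈ (Icc 1 m).filter (fun k => Nat.gcd k m = 1),
    Complex.exp (2 * Real.pi * Complex.I * k * n / m)

theorem IsPrimitiveRoot.sum_Icc_pow_pow_eq_ite {R : Type*} [CommRing R] [IsDomain R] {ζ : R}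
    {m : ℕ} (hζ : IsPrimitiveRoot ζ m) (n : ℕ) :
    ∑ k ∈ Icc 1 m, (ζ ^ n) ^ k = if m ∣ n then (m : R) else 0 := by
  split_ifs with hmn
  · simp [(hζ.pow_eq_one_iff_dvd n).mpr hmn]
  have hne : ζ ^ n - 1 ≠ 0 := sub_ne_zero.mpr (mt (hζ.pow_eq_one_iff_dvd n).mp hmn)
  have hgeom : (∑ k ∈ range m, (ζ ^ n) ^ k) * (ζ ^ n - 1) = 0 := by
    rw [geom_sum_mul, ← pow_mul, mul_comm, pow_mul, hζ.pow_eq_one, one_pow, sub_self]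
  rw [← Ico_add_one_right_eq_Icc, sum_Ico_eq_sum_range, add_tsub_cancel_right]
  simp only [pow_add, pow_one, ← mul_sum, (mul_eq_zero.mp hgeom).resolve_right hne, mul_zero]

theorem sum_Icc_div_eq_sum_filter_dvd {M : Type*} [AddCommMonoid M] (F : ℕ → M) {b : ℕ}
    (hb : 0 < b) (N : ℕ) :
    ∑ u ∈ Icc 1 (N / b), F u = ∑ m ∈ Icc 1 N with b ∣ m, F (m / b) := by
  refine sum_nbij' (b * ·) (· / b) ?_ ?_ ?_ ?_ ?_
  · intro u hu
    simp only [mem_filter, mem_Icc] at hu ⊢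
    have hub : u * b ≤ N := (Nat.le_div_iff_mul_le hb).mp hu.2
    exact ⟨⟨Nat.mul_pos hb hu.1, by rwa [mul_comm]⟩, dvd_mul_right b u⟩
  · intro m hm
    simp only [mem_filter, mem_Icc] at hm ⊢
    exact ⟨Nat.div_pos (Nat.le_of_dvd hm.1.1 hm.2) hb, Nat.div_le_div_right hm.1.2⟩
  · intro u _
    exact Nat.mul_div_cancel_left u hb
  · intro m hm
    exact Nat.mul_div_cancel' (mem_filter.mp hm).2
  · intro u _
    rw [Nat.mul_div_cancel_left u hb]

theorem sum_Icc_sum_Icc_div_eq_sum_divisors {M : Type*} [AddCommMonoid M] (F : ℕ → ℕ → M)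
    (N : ℕ) :
    ∑ b ∈ Icc 1 N, ∑ u ∈ Icc 1 (N / b), F b u = ∑ m ∈ Icc 1 N, ∑ b ∈ m.divisors, F b (m / b) := by
  rw [sum_congr rfl fun b hb => sum_Icc_div_eq_sum_filter_dvd (F b) (mem_Icc.mp hb).1 N]
  refine sum_comm' fun b m => ?_
  simp only [mem_filter, mem_Icc, Nat.mem_divisors]
  constructor
  · rintro ⟨-, hm, hbm⟩
    exact ⟨⟨hbm, by omega⟩, hm⟩
  · rintro ⟨⟨hbm, hm0⟩, hm⟩
    exact ⟨⟨Nat.pos_of_dvd_of_pos hbm (by omega), (Nat.le_of_dvd (by omega) hbm).trans hm.2⟩,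
      hm, hbm⟩

theorem sum_divisors_sum_coprime_div_eq_sum_Icc_div {M : Type*} [AddCommMonoid M] (φ : ℚ → M)
    {m : ℕ} (hm : m ≠ 0) :
    ∑ b ∈ m.divisors, ∑ j ∈ Icc 1 b with j.gcd b = 1, φ (j / b) = ∑ k ∈ Icc 1 m, φ (k / m) := by
  rw [sum_sigma']
  refine sum_nbij' (fun p => p.2 * (m / p.1)) (fun k => ⟨m / k.gcd m, k / k.gcd m⟩)
    ?_ ?_ ?_ ?_ ?_
  · rintro ⟨b, j⟩ hp
    simp only [mem_sigma, Nat.mem_divisors, mem_filter, mem_Icc] at hp ⊢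
    obtain ⟨⟨⟨c, rfl⟩, hbc⟩, ⟨hj, hjb⟩, -⟩ := hp
    rw [Nat.mul_div_cancel_left c (Nat.pos_of_ne_zero (left_ne_zero_of_mul hbc))]
    exact ⟨Nat.mul_pos hj (Nat.pos_of_ne_zero (right_ne_zero_of_mul hbc)),
      Nat.mul_le_mul_right c hjb⟩
  · intro k hk
    simp only [mem_sigma, Nat.mem_divisors, mem_filter, mem_Icc] at hk ⊢
    have hgcd : 0 < k.gcd m := Nat.gcd_pos_of_pos_left m hk.1
    exact ⟨⟨Nat.div_dvd_of_dvd (Nat.gcd_dvd_right k m), hm⟩,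
      ⟨Nat.div_pos (Nat.gcd_le_left m hk.1) hgcd, Nat.div_le_div_right hk.2⟩,
      Nat.coprime_div_gcd_div_gcd hgcd⟩
  · rintro ⟨b, j⟩ hp
    simp only [mem_sigma, Nat.mem_divisors, mem_filter] at hp
    obtain ⟨⟨⟨c, rfl⟩, hbc⟩, -, hjb⟩ := hp
    have hgcd : (j * c).gcd (b * c) = c := by rw [Nat.gcd_mul_right, hjb, one_mul]
    simp only [Nat.mul_div_cancel_left c (Nat.pos_of_ne_zero (left_ne_zero_of_mul hbc)), hgcd,
      Nat.mul_div_cancel _ (Nat.pos_of_ne_zero (right_ne_zero_of_mul hbc))]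
  · intro k _
    simp only [Nat.div_div_self (Nat.gcd_dvd_right k m) hm,
      Nat.div_mul_cancel (Nat.gcd_dvd_left k m)]
  · rintro ⟨b, j⟩ hp
    simp only [mem_sigma, Nat.mem_divisors] at hp
    obtain ⟨⟨⟨c, rfl⟩, hbc⟩, -⟩ := hp
    have hc : (c : ℚ) ≠ 0 := by exact_mod_cast right_ne_zero_of_mul hbc
    rw [Nat.mul_div_cancel_left c (Nat.pos_of_ne_zero (left_ne_zero_of_mul hbc))]
    push_cast
    rw [mul_div_mul_right _ _ hc]

theorem sum_divisors_ramanujanSum {m : ℕ} (hm : m ≠ 0) (n : ℕ) :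
    ∑ b ∈ m.divisors, ramanujanSum b n = if m ∣ n then (m : ℂ) else 0 := by
  calc ∑ b ∈ m.divisors, ramanujanSum b n
      = ∑ b ∈ m.divisors, ∑ j ∈ Icc 1 b with j.gcd b = 1,
          exp (2 * π * I * n * ((j / b : ℚ) : ℂ)) := by
        refine sum_congr rfl fun b _ => sum_congr rfl fun j _ => ?_
        push_cast
        ring_nf
    _ = ∑ k ∈ Icc 1 m, exp (2 * π * I * n * ((k / m : ℚ) : ℂ)) :=
        sum_divisors_sum_coprime_div_eq_sum_Icc_div (fun q : ℚ => exp (2 * π * I * n * q)) hm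
    _ = ∑ k ∈ Icc 1 m, (exp (2 * π * I / m) ^ n) ^ k := by
        refine sum_congr rfl fun k _ => ?_
        rw [← Complex.exp_nat_mul, ← Complex.exp_nat_mul]
        push_cast
        ring_nf
    _ = if m ∣ n then (m : ℂ) else 0 := (Complex.isPrimitiveRoot_exp m hm).sum_Icc_pow_pow_eq_ite n

theorem divisor_sum_eq_ramanujan_sum (g : ℕ → ℂ) (f : ℕ → ℂ)
    (hf : ∀ n : ℕ, 0 < n → f n = ∑ d ∈ n.divisors, g d)
    (n : ℕ) (hn : 0 < n) :
    f n = ∑ b ∈ Icc 1 n,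
      ramanujanSum b n * ∑ u ∈ Icc 1 (n / b), g (b * u) / ((b : ℂ) * u) := by
  simp only [mul_sum]
  rw [sum_Icc_sum_Icc_div_eq_sum_divisors (fun b u => ramanujanSum b n * (g (b * u) / (b * u)))]
  have hcollect : ∀ m ∈ Icc 1 n, ∑ b ∈ m.divisors,
      ramanujanSum b n * (g (b * (m / b)) / ((b : ℂ) * ((m / b : ℕ) : ℂ)))
        = if m ∣ n then g m else 0 := by
    intro m hm
    have hm0 : m ≠ 0 := Nat.one_le_iff_ne_zero.mp (mem_Icc.mp hm).1
    rw [sum_congr rfl fun b hb => by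
      rw [← Nat.cast_mul, Nat.mul_div_cancel' (Nat.dvd_of_mem_divisors hb)],
      ← sum_mul, sum_divisors_ramanujanSum hm0]
    split_ifs
    · field_simp
    · exact zero_mul _
  rw [sum_congr rfl hcollect, ← sum_filter, hf n hn, Nat.divisors, Ico_add_one_right_eq_Icc]
end
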